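/- arXiv:0906.2548 — 6 statements merged into one kernel-verified Lean document; each statement's English description precedes it below -/
import Mathlib

section
/- In the Kovalevskaya case (A = diag(2,2,1), e = (1,0,0)), the Kovalevskaya function K = (ω₁² − ω₂² + ν₁)² + (2ω₁ω₂ + ν₂)² is a first integral: its time derivative vanishes along every solution of the equations ν̇ = ν × ω, 2ω̇₁ = ω₂ω₃, 2ω̇₂ = −ω₁ω₃ − ν₃, ω̇₃ = ν₂. -/
/-!
With `X = ω₁² − ω₂² + ν₁` and `Y = 2ω₁ω₂ + ν₂` (the real and imaginary parts of
`(ω₁ + iω₂)² + (ν₁ + iν₂)`), the equations of motion give `Ẋ = ω₃ Y` and `Ẏ = −ω₃ X`: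
the point `(X, Y)` rotates with angular velocity `ω₃`, so `K = X² + Y²` is constant.
-/

theorem HasDerivAt.sq_add_sq_of_rotation {x y : ℝ → ℝ} {a t : ℝ}
    (hx : HasDerivAt x (a * y t) t) (hy : HasDerivAt y (-(a * x t)) t) :
    HasDerivAt (fun s => x s ^ 2 + y s ^ 2) 0 t := by
  refine ((hx.pow 2).add (hy.pow 2)).congr_deriv ?_
  ring

theorem kovalevskaya_integral_conserved_general
    (ν1 ν2 ν3 ω1 ω2 ω3 ν1' ν2' ω1' ω2' : ℝ → ℝ)
    (hν1 : ∀ t, HasDerivAt ν1 (ν1' t) t)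
    (hν2 : ∀ t, HasDerivAt ν2 (ν2' t) t)
    (hω1 : ∀ t, HasDerivAt ω1 (ω1' t) t)
    (hω2 : ∀ t, HasDerivAt ω2 (ω2' t) t)
    (e1 : ∀ t, ν1' t = ν2 t * ω3 t - ν3 t * ω2 t)
    (e2 : ∀ t, ν2' t = ν3 t * ω1 t - ν1 t * ω3 t)
    (e4 : ∀ t, 2 * ω1' t = ω2 t * ω3 t)
    (e5 : ∀ t, 2 * ω2' t = -(ω1 t * ω3 t) - ν3 t) :
    ∀ t, HasDerivAt
      (fun s => ((ω1 s)^2 - (ω2 s)^2 + ν1 s)^2 + (2 * ω1 s * ω2 s + ν2 s)^2) 0 t := by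
  intro t
  have hX : HasDerivAt (fun s => ω1 s ^ 2 - ω2 s ^ 2 + ν1 s)
      (ω3 t * (2 * ω1 t * ω2 t + ν2 t)) t := by
    refine ((((hω1 t).pow 2).sub ((hω2 t).pow 2)).add (hν1 t)).congr_deriv ?_
    linear_combination ω1 t * e4 t - ω2 t * e5 t + e1 t
  have hY : HasDerivAt (fun s => 2 * ω1 s * ω2 s + ν2 s)
      (-(ω3 t * (ω1 t ^ 2 - ω2 t ^ 2 + ν1 t))) t := by
    refine ((((hω1 t).const_mul 2).mul (hω2 t)).add (hν2 t)).congr_deriv ?_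
    linear_combination ω2 t * e4 t + ω1 t * e5 t + e2 t
  exact hX.sq_add_sq_of_rotation hY

/-- In the Kovalevskaya case, `K = (ω₁² − ω₂² + ν₁)² + (2ω₁ω₂ + ν₂)²`
is a first integral of the equations of motion. -/
theorem kovalevskaya_integral_conserved
    (ν1 ν2 ν3 ω1 ω2 ω3 ν1' ν2' ν3' ω1' ω2' ω3' : ℝ → ℝ)
    (hν1 : ∀ t, HasDerivAt ν1 (ν1' t) t)
    (hν2 : ∀ t, HasDerivAt ν2 (ν2' t) t)
    (hν3 : ∀ t, HasDerivAt ν3 (ν3' t) t)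
    (hω1 : ∀ t, HasDerivAt ω1 (ω1' t) t)
    (hω2 : ∀ t, HasDerivAt ω2 (ω2' t) t)
    (hω3 : ∀ t, HasDerivAt ω3 (ω3' t) t)
    (e1 : ∀ t, ν1' t = ν2 t * ω3 t - ν3 t * ω2 t)
    (e2 : ∀ t, ν2' t = ν3 t * ω1 t - ν1 t * ω3 t)
    (e3 : ∀ t, ν3' t = ν1 t * ω2 t - ν2 t * ω1 t)
    (e4 : ∀ t, 2 * ω1' t = ω2 t * ω3 t)
    (e5 : ∀ t, 2 * ω2' t = -(ω1 t * ω3 t) - ν3 t)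
    (e6 : ∀ t, ω3' t = ν2 t) :
    ∀ t, HasDerivAt
      (fun s => ((ω1 s)^2 - (ω2 s)^2 + ν1 s)^2 + (2 * ω1 s * ω2 s + ν2 s)^2) 0 t :=
  kovalevskaya_integral_conserved_general ν1 ν2 ν3 ω1 ω2 ω3 ν1' ν2' ω1' ω2' hν1 hν2 hω1 hω2 e1 e2 e4
    e5
end

section
/- In the Goryachev–Chaplygin case, the function K = ω₃(ω₁² + ω₂²) + ω₁ν₃ is a first integral on the invariant set {G = 0}: if ν, ω solve the Goryachev–Chaplygin equations ν̇ = ν × ω, 4ω̇₁ = 3ω₂ω₃, 4ω̇₂ = −3ω₁ω₃ − ν₃, ω̇₃ = ν₂, and the initial condition satisfies 4(ω₁ν₁ + ω₂ν₂) + ω₃ν₃ = 0, then dK/dt = 0 along the solution. -/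
/-!
The area integral `G = ⟨Iω, ν⟩` with `I = diag(4, 4, 1)` is conserved by the Goryachev–Chaplygin
flow, so `G ≡ 0` once `G` vanishes at time `0`. Along any solution `dK/dt = (ω₂/4) G`, hence
`K` is conserved on `{G = 0}`.
-/

namespace GoryachevChaplygin

def areaIntegral (ν1 ν2 ν3 ω1 ω2 ω3 : ℝ → ℝ) (s : ℝ) : ℝ :=
  4 * (ω1 s * ν1 s + ω2 s * ν2 s) + ω3 s * ν3 s

def gcIntegral (ν3 ω1 ω2 ω3 : ℝ → ℝ) (s : ℝ) : ℝ :=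
  ω3 s * ((ω1 s)^2 + (ω2 s)^2) + ω1 s * ν3 s

variable {ν1 ν2 ν3 ω1 ω2 ω3 ν1' ν2' ν3' ω1' ω2' ω3' : ℝ → ℝ} {t : ℝ}

theorem hasDerivAt_areaIntegral
    (hν1 : HasDerivAt ν1 (ν1' t) t) (hν2 : HasDerivAt ν2 (ν2' t) t)
    (hν3 : HasDerivAt ν3 (ν3' t) t) (hω1 : HasDerivAt ω1 (ω1' t) t)
    (hω2 : HasDerivAt ω2 (ω2' t) t) (hω3 : HasDerivAt ω3 (ω3' t) t)
    (e1 : ν1' t = ν2 t * ω3 t - ν3 t * ω2 t)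
    (e2 : ν2' t = ν3 t * ω1 t - ν1 t * ω3 t)
    (e3 : ν3' t = ν1 t * ω2 t - ν2 t * ω1 t)
    (e4 : 4 * ω1' t = 3 * ω2 t * ω3 t)
    (e5 : 4 * ω2' t = -(3 * ω1 t * ω3 t) - ν3 t)
    (e6 : ω3' t = ν2 t) :
    HasDerivAt (GoryachevChaplygin.areaIntegral ν1 ν2 ν3 ω1 ω2 ω3) 0 t := by
  refine ((((hω1.mul hν1).add (hω2.mul hν2)).const_mul 4).add (hω3.mul hν3)).congr_deriv ?_
  linear_combination ν1 t * e4 + 4 * ω1 t * e1 + ν2 t * e5 + 4 * ω2 t * e2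
    + ν3 t * e6 + ω3 t * e3

theorem hasDerivAt_gcIntegral
    (hν3 : HasDerivAt ν3 (ν3' t) t) (hω1 : HasDerivAt ω1 (ω1' t) t)
    (hω2 : HasDerivAt ω2 (ω2' t) t) (hω3 : HasDerivAt ω3 (ω3' t) t)
    (e3 : ν3' t = ν1 t * ω2 t - ν2 t * ω1 t)
    (e4 : 4 * ω1' t = 3 * ω2 t * ω3 t)
    (e5 : 4 * ω2' t = -(3 * ω1 t * ω3 t) - ν3 t)
    (e6 : ω3' t = ν2 t) :
    HasDerivAt (gcIntegral ν3 ω1 ω2 ω3)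
      (ω2 t / 4 * areaIntegral ν1 ν2 ν3 ω1 ω2 ω3 t) t := by
  refine ((hω3.mul ((hω1.fun_pow 2).add (hω2.fun_pow 2))).add (hω1.mul hν3)).congr_deriv ?_
  simp only [areaIntegral, Pi.add_apply]
  linear_combination (ω1 t ^ 2 + ω2 t ^ 2) * e6 + (ω3 t * ω1 t / 2 + ν3 t / 4) * e4
    + ω3 t * ω2 t / 2 * e5 + ω1 t * e3

end GoryachevChaplygin

/-- In the Goryachev–Chaplygin case, `K = ω₃(ω₁² + ω₂²) + ω₁ν₃` is a first
integral on the invariant set `{G = 0}`. -/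
theorem goryachev_chaplygin_integral_conserved
    (ν1 ν2 ν3 ω1 ω2 ω3 ν1' ν2' ν3' ω1' ω2' ω3' : ℝ → ℝ)
    (hν1 : ∀ t, HasDerivAt ν1 (ν1' t) t)
    (hν2 : ∀ t, HasDerivAt ν2 (ν2' t) t)
    (hν3 : ∀ t, HasDerivAt ν3 (ν3' t) t)
    (hω1 : ∀ t, HasDerivAt ω1 (ω1' t) t)
    (hω2 : ∀ t, HasDerivAt ω2 (ω2' t) t)
    (hω3 : ∀ t, HasDerivAt ω3 (ω3' t) t)
    (e1 : ∀ t, ν1' t = ν2 t * ω3 t - ν3 t * ω2 t)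
    (e2 : ∀ t, ν2' t = ν3 t * ω1 t - ν1 t * ω3 t)
    (e3 : ∀ t, ν3' t = ν1 t * ω2 t - ν2 t * ω1 t)
    (e4 : ∀ t, 4 * ω1' t = 3 * ω2 t * ω3 t)
    (e5 : ∀ t, 4 * ω2' t = -(3 * ω1 t * ω3 t) - ν3 t)
    (e6 : ∀ t, ω3' t = ν2 t)
    (hG0 : 4 * (ω1 0 * ν1 0 + ω2 0 * ν2 0) + ω3 0 * ν3 0 = 0) :
    ∀ t, HasDerivAt
      (fun s => ω3 s * ((ω1 s)^2 + (ω2 s)^2) + ω1 s * ν3 s) 0 t := by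
  have hG' : ∀ t, HasDerivAt (GoryachevChaplygin.areaIntegral ν1 ν2 ν3 ω1 ω2 ω3) 0 t := fun t =>
    GoryachevChaplygin.hasDerivAt_areaIntegral (hν1 t) (hν2 t) (hν3 t) (hω1 t) (hω2 t) (hω3 t)
      (e1 t) (e2 t) (e3 t) (e4 t) (e5 t) (e6 t)
  have hG : ∀ t, GoryachevChaplygin.areaIntegral ν1 ν2 ν3 ω1 ω2 ω3 t = 0 := fun t => by
    rw [is_const_of_deriv_eq_zero (fun s => (hG' s).differentiableAt)
      (fun s => (hG' s).deriv) t 0]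
    exact hG0
  intro t
  have hK := GoryachevChaplygin.hasDerivAt_gcIntegral (hν3 t) (hω1 t) (hω2 t) (hω3 t)
    (e3 t) (e4 t) (e5 t) (e6 t)
  rwa [hG t, mul_zero] at hK
end

section
/- The quantity G = 4(ω₁ν₁ + ω₂ν₂) + ω₃ν₃ is conserved along solutions of the Goryachev–Chaplygin equations ν̇ = ν × ω, 4ω̇₁ = 3ω₂ω₃, 4ω̇₂ = −3ω₁ω₃ − ν₃, ω̇₃ = ν₂; hence the set {G = 0} is invariant under the flow. -/
/-!
Write `G = ⟨Iω, ν⟩` with `I = diag(4, 4, 1)`. The `ω`-equations say `Iω̇ = Iω × ω + ν × r` with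
`r = (-1, 0, 0)`, so `Ġ = ⟨Iω × ω, ν⟩ + ⟨ν × r, ν⟩ + ⟨Iω, ν × ω⟩`: the middle term vanishes and the
outer two cancel as triple products. A function with zero derivative everywhere is constant.
-/

theorem goryachevChaplygin_area_rate_eq_zero
    {ν1 ν2 ν3 ω1 ω2 ω3 ν1' ν2' ν3' ω1' ω2' ω3' : ℝ}
    (e1 : ν1' = ν2 * ω3 - ν3 * ω2) (e2 : ν2' = ν3 * ω1 - ν1 * ω3) (e3 : ν3' = ν1 * ω2 - ν2 * ω1)
    (e4 : 4 * ω1' = 3 * ω2 * ω3) (e5 : 4 * ω2' = -(3 * ω1 * ω3) - ν3) (e6 : ω3' = ν2) :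
    4 * (ω1' * ν1 + ω1 * ν1' + (ω2' * ν2 + ω2 * ν2')) + (ω3' * ν3 + ω3 * ν3') = 0 := by
  linear_combination (4 * ω1) * e1 + (4 * ω2) * e2 + ω3 * e3 + ν1 * e4 + ν2 * e5 + ν3 * e6

theorem eq_of_forall_hasDerivAt_zero {𝕜 E : Type*} [RCLike 𝕜] [NormedAddCommGroup E]
    [NormedSpace 𝕜 E] {f : 𝕜 → E} (hf : ∀ x, HasDerivAt f 0 x) (x y : 𝕜) : f x = f y :=
  is_const_of_deriv_eq_zero (fun z => (hf z).differentiableAt) (fun z => (hf z).deriv) x y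

/-- `G = 4(ω₁ν₁ + ω₂ν₂) + ω₃ν₃` is conserved along solutions of the
Goryachev–Chaplygin equations; hence `{G = 0}` is invariant under the flow. -/
theorem goryachev_chaplygin_area_integral_conserved
    (ν1 ν2 ν3 ω1 ω2 ω3 ν1' ν2' ν3' ω1' ω2' ω3' : ℝ → ℝ)
    (hν1 : ∀ t, HasDerivAt ν1 (ν1' t) t)
    (hν2 : ∀ t, HasDerivAt ν2 (ν2' t) t)
    (hν3 : ∀ t, HasDerivAt ν3 (ν3' t) t)
    (hω1 : ∀ t, HasDerivAt ω1 (ω1' t) t)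
    (hω2 : ∀ t, HasDerivAt ω2 (ω2' t) t)
    (hω3 : ∀ t, HasDerivAt ω3 (ω3' t) t)
    (e1 : ∀ t, ν1' t = ν2 t * ω3 t - ν3 t * ω2 t)
    (e2 : ∀ t, ν2' t = ν3 t * ω1 t - ν1 t * ω3 t)
    (e3 : ∀ t, ν3' t = ν1 t * ω2 t - ν2 t * ω1 t)
    (e4 : ∀ t, 4 * ω1' t = 3 * ω2 t * ω3 t)
    (e5 : ∀ t, 4 * ω2' t = -(3 * ω1 t * ω3 t) - ν3 t)
    (e6 : ∀ t, ω3' t = ν2 t) :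
    (∀ t, HasDerivAt
      (fun s => 4 * (ω1 s * ν1 s + ω2 s * ν2 s) + ω3 s * ν3 s) 0 t) ∧
    (4 * (ω1 0 * ν1 0 + ω2 0 * ν2 0) + ω3 0 * ν3 0 = 0 →
      ∀ t, 4 * (ω1 t * ν1 t + ω2 t * ν2 t) + ω3 t * ν3 t = 0) := by
  have hG : ∀ t, HasDerivAt
      (fun s => 4 * (ω1 s * ν1 s + ω2 s * ν2 s) + ω3 s * ν3 s) 0 t := fun t =>
    (((((hω1 t).mul (hν1 t)).add ((hω2 t).mul (hν2 t))).const_mul 4).add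
      ((hω3 t).mul (hν3 t))).congr_deriv
      (goryachevChaplygin_area_rate_eq_zero (e1 t) (e2 t) (e3 t) (e4 t) (e5 t) (e6 t))
  refine ⟨hG, fun hG0 t => ?_⟩
  rw [← hG0]
  exact eq_of_forall_hasDerivAt_zero hG t 0
end

section
/- In the Kovalevskaya case, for every point (ν, ω) with ‖ν‖ = 1, the values h = H(ν,ω), k = K(ν,ω), g = G(ν,ω) satisfy the inequality k ≥ 0, and moreover if k = 0 then h ≥ 2g². -/
/-- In the Kovalevskaya case, on the unit sphere the integral values satisfy
`k ≥ 0`, and if `k = 0` then `h ≥ 2g²`. -/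
theorem kovalevskaya_values_k_nonneg
    (ν1 ν2 ν3 ω1 ω2 ω3 : ℝ)
    (hν : ν1^2 + ν2^2 + ν3^2 = 1) :
    0 ≤ (ω1^2 - ω2^2 + ν1)^2 + (2*ω1*ω2 + ν2)^2 ∧
    ((ω1^2 - ω2^2 + ν1)^2 + (2*ω1*ω2 + ν2)^2 = 0 →
      2 * (ω1*ν1 + ω2*ν2 + (1/2)*ω3*ν3)^2 ≤ ω1^2 + ω2^2 + (1/2)*ω3^2 - ν1) := by
  refine ⟨by positivity, fun hk => ?_⟩
  have h1 : ω1^2 - ω2^2 + ν1 = 0 := by nlinarith [sq_nonneg (ω1^2 - ω2^2 + ν1), sq_nonneg (2*ω1*ω2 + ν2)]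
  have h2 : 2*ω1*ω2 + ν2 = 0 := by nlinarith [sq_nonneg (ω1^2 - ω2^2 + ν1), sq_nonneg (2*ω1*ω2 + ν2)]
  have e1 : ν1 = ω2^2 - ω1^2 := by linarith
  have e2 : ν2 = -(2*ω1*ω2) := by linarith
  subst e1 e2
  nlinarith [sq_nonneg (ω1*ν3 + ω3/2*(ω1^2+ω2^2)), sq_nonneg (ω1*ν3 - ω3/2*(ω1^2+ω2^2)), sq_nonneg ν3, sq_nonneg (ω1^2+ω2^2), hν]
end

section
/- In the Goryachev–Chaplygin case, every point of the set {(ν,ω) : ‖ν‖ = 1, 4(ω₁ν₁+ω₂ν₂)+ω₃ν₃ = 0} has integral values (h,k) = (H, K) satisfying h ≥ (3/2)(2|k|)^{2/3} − 1, where H = 2(ω₁² + ω₂²) + (1/2)ω₃² − ν₁ and K = ω₃(ω₁² + ω₂²) + ω₁ν₃. In particular the region {h < (3/2)(2k)^{2/3} − 1, k > 0} contains no integral values, so the corresponding integral manifolds are empty. -/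
lemma gc_rpow_aux (k t : ℝ) (ht0 : 0 ≤ t) (h : 27*k^2 ≤ 2*t^3) :
    (3/2) * (2*|k|) ^ ((2:ℝ)/3) ≤ t := by
  have hy : (0:ℝ) ≤ (2/3)*t := by linarith
  have hstep : 2*|k| ≤ ((2/3)*t) ^ ((3:ℝ)/2) := by
    have hb : (0:ℝ) ≤ ((2/3)*t) ^ ((3:ℝ)/2) := Real.rpow_nonneg hy _
    refine le_of_pow_le_pow_left₀ (n := 2) two_ne_zero hb ?_
    have hsq : (((2/3)*t) ^ ((3:ℝ)/2))^2 = ((2/3)*t)^3 := by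
      rw [← Real.rpow_natCast (((2/3)*t) ^ ((3:ℝ)/2)) 2, ← Real.rpow_natCast ((2/3)*t) 3,
        ← Real.rpow_mul hy]
      norm_num
    rw [hsq]
    nlinarith [h, sq_abs k]
  have h1 : (2*|k|) ^ ((2:ℝ)/3) ≤ (((2/3)*t) ^ ((3:ℝ)/2)) ^ ((2:ℝ)/3) :=
    Real.rpow_le_rpow (by positivity) hstep (by norm_num)
  have h2 : (((2/3)*t) ^ ((3:ℝ)/2)) ^ ((2:ℝ)/3) = (2/3)*t := by
    rw [← Real.rpow_mul hy]; norm_num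
  rw [h2] at h1
  nlinarith [h1, Real.rpow_nonneg (by positivity : (0:ℝ) ≤ 2*|k|) ((2:ℝ)/3)]

lemma gc_amgm_aux (V W : ℝ) (hV : 0 ≤ V) (hW : 0 ≤ W) :
    27*(2*(W/1)*V^2) ≤ 2*(2*V + W)^3 := by
  nlinarith [mul_nonneg (sq_nonneg (V - W)) hV, mul_nonneg (sq_nonneg (V - W)) hW]

/-- Goryachev–Chaplygin case: on `{‖ν‖ = 1, G = 0}` the integral values satisfy
`h ≥ (3/2)(2|k|)^{2/3} − 1`; hence the region below the lower curve is empty. -/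
theorem goryachev_chaplygin_admissible_region
    (ν1 ν2 ν3 ω1 ω2 ω3 : ℝ)
    (hν : ν1^2 + ν2^2 + ν3^2 = 1)
    (hG : 4*(ω1*ν1 + ω2*ν2) + ω3*ν3 = 0) :
    (3/2) * (2 * |ω3*(ω1^2 + ω2^2) + ω1*ν3|) ^ ((2:ℝ)/3) - 1
      ≤ 2*(ω1^2 + ω2^2) + (1/2)*ω3^2 - ν1 := by
  have hkid : ω3*(ω1^2 + ω2^2) + ω1*ν3
      = ω3*((ω1^2+ω2^2) - ν3^2/4) + (-ω2*ν3)*ν2 + (ω1*ν3)*(1-ν1) := by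
    linear_combination (ν3/4) * hG
  have hCS : (ω3*(ω1^2 + ω2^2) + ω1*ν3)^2
      ≤ 2*((ω3^2 + ν2^2 + (1 - ν1)^2)/2)*((ω1^2 + ω2^2) + ν3^2/4)^2 := by
    rw [hkid]
    nlinarith [sq_nonneg (ω3*(-ω2*ν3) - ν2*((ω1^2+ω2^2) - ν3^2/4)),
      sq_nonneg (ω3*(ω1*ν3) - (1-ν1)*((ω1^2+ω2^2) - ν3^2/4)),
      sq_nonneg (ν2*(ω1*ν3) - (1-ν1)*(-ω2*ν3))]
  have hAM : 27*(2*((ω3^2 + ν2^2 + (1 - ν1)^2)/2)*((ω1^2 + ω2^2) + ν3^2/4)^2)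
      ≤ 2*(2*((ω1^2 + ω2^2) + ν3^2/4) + (ω3^2 + ν2^2 + (1 - ν1)^2)/2)^3 := by
    have := gc_amgm_aux ((ω1^2 + ω2^2) + ν3^2/4) ((ω3^2 + ν2^2 + (1 - ν1)^2)/2)
      (by positivity) (by positivity)
    linarith [this]
  have ht : 2*(ω1^2 + ω2^2) + (1/2)*ω3^2 - ν1 + 1
      = 2*((ω1^2 + ω2^2) + ν3^2/4) + (ω3^2 + ν2^2 + (1 - ν1)^2)/2 := by
    linear_combination (-(1:ℝ)/2) * hν
  have key : 27*(ω3*(ω1^2 + ω2^2) + ω1*ν3)^2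
      ≤ 2*(2*(ω1^2 + ω2^2) + (1/2)*ω3^2 - ν1 + 1)^3 := by
    rw [ht]; linarith
  have ht0 : 0 ≤ 2*(ω1^2 + ω2^2) + (1/2)*ω3^2 - ν1 + 1 := by
    rw [ht]; positivity
  have := gc_rpow_aux (ω3*(ω1^2 + ω2^2) + ω1*ν3)
    (2*(ω1^2 + ω2^2) + (1/2)*ω3^2 - ν1 + 1) ht0 key
  linarith [this]
end

section
/- The two curves h = (3/2)(2k)^{2/3} + 1 and h = (3/2)(2k)^{2/3} − 1 in the (h,k)-plane (for k ∈ ℝ, using (2k)^{2/3} = (2|k|)^{2/3}) together with the ray {k = 0, h ≥ −1} divide the plane into exactly 5 open connected components. -/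
noncomputable def gcF (k : ℝ) : ℝ := (3/2) * (2 * |k|) ^ ((2:ℝ)/3)

noncomputable def gcU (p : ℝ × ℝ) : ℝ := p.1 - gcF p.2

def gcS : Set (ℝ × ℝ) := {p | p.2 = 0 ∧ -1 ≤ p.1}
  ∪ {p | p.1 = gcF p.2 + 1} ∪ {p | p.1 = gcF p.2 - 1}

noncomputable def gcG (p : ℝ × ℝ) : Fin 5 :=
  if gcU p < -1 then 0
  else if gcU p < 1 then (if 0 < p.2 then 1 else 2)
  else (if 0 < p.2 then 3 else 4)

def gcR : Fin 5 → Set (ℝ × ℝ)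
  | 0 => {p | gcU p < -1}
  | 1 => {p | -1 < gcU p ∧ gcU p < 1 ∧ 0 < p.2}
  | 2 => {p | -1 < gcU p ∧ gcU p < 1 ∧ p.2 < 0}
  | 3 => {p | 1 < gcU p ∧ 0 < p.2}
  | 4 => {p | 1 < gcU p ∧ p.2 < 0}

lemma gcF_cont : Continuous gcF := by
  unfold gcF
  exact continuous_const.mul
    ((Real.continuous_rpow_const (by norm_num)).comp (continuous_const.mul continuous_abs))

lemma gcF_nonneg (k : ℝ) : 0 ≤ gcF k := by
  unfold gcF; positivity

lemma gcF_zero : gcF 0 = 0 := by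
  unfold gcF
  rw [abs_zero, mul_zero, Real.zero_rpow (by norm_num : (2:ℝ)/3 ≠ 0), mul_zero]

lemma gcU_cont : Continuous gcU :=
  continuous_fst.sub (gcF_cont.comp continuous_snd)

noncomputable def gcE : (ℝ × ℝ) ≃ₜ (ℝ × ℝ) where
  toFun p := (gcU p, p.2)
  invFun p := (p.1 + gcF p.2, p.2)
  left_inv p := by simp [gcU]
  right_inv p := by simp [gcU]
  continuous_toFun := gcU_cont.prodMk continuous_snd
  continuous_invFun := (continuous_fst.add (gcF_cont.comp continuous_snd)).prodMk continuous_snd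

lemma gcS_iff (p : ℝ × ℝ) :
    p ∈ gcS ↔ (p.2 = 0 ∧ -1 ≤ p.1) ∨ p.1 = gcF p.2 + 1 ∨ p.1 = gcF p.2 - 1 := by
  simp [gcS, or_assoc]

lemma gcR_open (i : Fin 5) : IsOpen (gcR i) := by
  fin_cases i
  · exact isOpen_Iio.preimage gcU_cont
  · show IsOpen {p : ℝ × ℝ | -1 < gcU p ∧ gcU p < 1 ∧ 0 < p.2}
    rw [show {p : ℝ × ℝ | -1 < gcU p ∧ gcU p < 1 ∧ 0 < p.2}
        = gcU ⁻¹' Set.Ioo (-1) 1 ∩ Prod.snd ⁻¹' Set.Ioi (0:ℝ) from by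
      ext p; simp [Set.mem_Ioo, and_assoc]]
    exact (isOpen_Ioo.preimage gcU_cont).inter (isOpen_Ioi.preimage continuous_snd)
  · show IsOpen {p : ℝ × ℝ | -1 < gcU p ∧ gcU p < 1 ∧ p.2 < 0}
    rw [show {p : ℝ × ℝ | -1 < gcU p ∧ gcU p < 1 ∧ p.2 < 0}
        = gcU ⁻¹' Set.Ioo (-1) 1 ∩ Prod.snd ⁻¹' Set.Iio (0:ℝ) from by
      ext p; simp [Set.mem_Ioo, and_assoc]]
    exact (isOpen_Ioo.preimage gcU_cont).inter (isOpen_Iio.preimage continuous_snd)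
  · show IsOpen {p : ℝ × ℝ | 1 < gcU p ∧ 0 < p.2}
    rw [show {p : ℝ × ℝ | 1 < gcU p ∧ 0 < p.2}
        = gcU ⁻¹' Set.Ioi 1 ∩ Prod.snd ⁻¹' Set.Ioi (0:ℝ) from by ext p; simp]
    exact (isOpen_Ioi.preimage gcU_cont).inter (isOpen_Ioi.preimage continuous_snd)
  · show IsOpen {p : ℝ × ℝ | 1 < gcU p ∧ p.2 < 0}
    rw [show {p : ℝ × ℝ | 1 < gcU p ∧ p.2 < 0}
        = gcU ⁻¹' Set.Ioi 1 ∩ Prod.snd ⁻¹' Set.Iio (0:ℝ) from by ext p; simp]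
    exact (isOpen_Ioi.preimage gcU_cont).inter (isOpen_Iio.preimage continuous_snd)

lemma gcE_apply (p : ℝ × ℝ) : gcE p = (gcU p, p.2) := rfl

set_option maxHeartbeats 1000000 in
lemma gcR_preconn (i : Fin 5) : IsPreconnected (gcR i) := by
  fin_cases i
  · show IsPreconnected (gcR 0)
    rw [show gcR 0 = gcE ⁻¹' (Set.Iio (-1) ×ˢ (Set.univ : Set ℝ)) from by
      ext p; simp [gcR, gcE_apply, Set.mem_prod]]
    rw [gcE.isPreconnected_preimage]
    exact ((convex_Iio _).prod convex_univ).isPreconnected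
  · show IsPreconnected (gcR 1)
    rw [show gcR 1 = gcE ⁻¹' (Set.Ioo (-1) 1 ×ˢ Set.Ioi (0:ℝ)) from by
      ext p; simp [gcR, gcE_apply, Set.mem_prod, and_assoc]]
    rw [gcE.isPreconnected_preimage]
    exact ((convex_Ioo _ _).prod (convex_Ioi _)).isPreconnected
  · show IsPreconnected (gcR 2)
    rw [show gcR 2 = gcE ⁻¹' (Set.Ioo (-1) 1 ×ˢ Set.Iio (0:ℝ)) from by
      ext p; simp [gcR, gcE_apply, Set.mem_prod, and_assoc]]
    rw [gcE.isPreconnected_preimage]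
    exact ((convex_Ioo _ _).prod (convex_Iio _)).isPreconnected
  · show IsPreconnected (gcR 3)
    rw [show gcR 3 = gcE ⁻¹' (Set.Ioi 1 ×ˢ Set.Ioi (0:ℝ)) from by
      ext p; simp [gcR, gcE_apply, Set.mem_prod]]
    rw [gcE.isPreconnected_preimage]
    exact ((convex_Ioi _).prod (convex_Ioi _)).isPreconnected
  · show IsPreconnected (gcR 4)
    rw [show gcR 4 = gcE ⁻¹' (Set.Ioi 1 ×ˢ Set.Iio (0:ℝ)) from by
      ext p; simp [gcR, gcE_apply, Set.mem_prod]]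
    rw [gcE.isPreconnected_preimage]
    exact ((convex_Ioi _).prod (convex_Iio _)).isPreconnected

lemma gcR_subset (i : Fin 5) : gcR i ⊆ gcSᶜ := by
  fin_cases i <;>
  · intro p hp hmem
    rw [gcS_iff] at hmem
    simp only [gcR, Set.mem_setOf_eq, gcU] at hp
    have h0 : p.2 = 0 → gcF p.2 = 0 := fun h => by rw [h, gcF_zero]
    rcases hmem with ⟨hz, hge⟩ | hc | hc
    · linarith [h0 hz]
    · linarith
    · linarith

lemma gcG_of_mem {p : ℝ × ℝ} {i : Fin 5} (h : p ∈ gcR i) : gcG p = i := by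
  fin_cases i <;> simp only [gcR, Set.mem_setOf_eq] at h <;> unfold gcG
  · rw [if_pos h]; rfl
  · rw [if_neg (not_lt.2 h.1.le), if_pos h.2.1, if_pos h.2.2]; rfl
  · rw [if_neg (not_lt.2 h.1.le), if_pos h.2.1, if_neg (not_lt.2 h.2.2.le)]; rfl
  · rw [if_neg (not_lt.2 (by linarith [h.1])), if_neg (not_lt.2 h.1.le), if_pos h.2]; rfl
  · rw [if_neg (not_lt.2 (by linarith [h.1])), if_neg (not_lt.2 h.1.le),
      if_neg (not_lt.2 h.2.le)]; rfl

lemma gcR_mem_of_compl {p : ℝ × ℝ} (hp : p ∈ gcSᶜ) : p ∈ gcR (gcG p) := by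
  rw [Set.mem_compl_iff, gcS_iff] at hp
  push_neg at hp
  obtain ⟨hp1, hp2, hp3⟩ := hp
  have h0 : p.2 = 0 → gcF p.2 = 0 := fun h => by rw [h, gcF_zero]
  have hne1 : gcU p ≠ 1 := fun h => hp2 (by unfold gcU at h; linarith)
  have hne1' : gcU p ≠ -1 := fun h => hp3 (by unfold gcU at h; linarith)
  have hzs : ¬ gcU p < -1 → p.2 ≠ 0 := by
    intro hge hz
    have := h0 hz
    have hu : gcU p = p.1 := by unfold gcU; rw [this]; ring
    exact absurd (hp1 hz) (by push_neg; linarith [not_lt.1 hge, hu ▸ not_lt.1 hge])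
  unfold gcG
  split_ifs with hA hB hC hD
  · exact hA
  · exact ⟨lt_of_le_of_ne (not_lt.1 hA) (Ne.symm hne1'), hB, hC⟩
  · exact ⟨lt_of_le_of_ne (not_lt.1 hA) (Ne.symm hne1'), hB,
      lt_of_le_of_ne (not_lt.1 hC) (hzs hA)⟩
  · exact ⟨lt_of_le_of_ne (not_lt.1 hB) (Ne.symm hne1), hD⟩
  · exact ⟨lt_of_le_of_ne (not_lt.1 hB) (Ne.symm hne1),
      lt_of_le_of_ne (not_lt.1 hD) (hzs hA)⟩

lemma gcR_nonempty (i : Fin 5) : ∃ p, p ∈ gcR i := by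
  fin_cases i
  · exact ⟨(gcF 0 - 2, 0), by show gcU _ < -1; unfold gcU; norm_num⟩
  · exact ⟨(gcF 1, 1), by refine ⟨?_, ?_, ?_⟩ <;> (try unfold gcU) <;> norm_num⟩
  · exact ⟨(gcF (-1), -1), by refine ⟨?_, ?_, ?_⟩ <;> (try unfold gcU) <;> norm_num⟩
  · exact ⟨(gcF 1 + 2, 1), by refine ⟨?_, ?_⟩ <;> (try unfold gcU) <;> norm_num⟩
  · exact ⟨(gcF (-1) + 2, -1), by refine ⟨?_, ?_⟩ <;> (try unfold gcU) <;> norm_num⟩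

theorem gc_main : Nat.card (ConnectedComponents ↥(gcSᶜ)) = 5 := by
  have hfiber : ∀ i : Fin 5,
      {x : ↥(gcSᶜ) | gcG x.val = i} = Subtype.val ⁻¹' gcR i := by
    intro i
    ext x
    simp only [Set.mem_setOf_eq, Set.mem_preimage]
    constructor
    · rintro rfl; exact gcR_mem_of_compl x.2
    · exact gcG_of_mem
  have hG : Continuous (fun x : ↥(gcSᶜ) => gcG x.val) := by
    apply IsLocallyConstant.continuous
    rw [IsLocallyConstant.iff_isOpen_fiber]
    intro y
    show IsOpen {x : ↥(gcSᶜ) | gcG x.val = y}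
    rw [hfiber y]
    exact (gcR_open y).preimage continuous_subtype_val
  have hbij : Function.Bijective hG.connectedComponentsLift := by
    constructor
    · intro c1 c2 hc
      obtain ⟨x, rfl⟩ := ConnectedComponents.surjective_coe c1
      obtain ⟨y, rfl⟩ := ConnectedComponents.surjective_coe c2
      simp only [Continuous.connectedComponentsLift_apply_coe] at hc
      set i := gcG y.val with hi
      have hx : x ∈ Subtype.val ⁻¹' gcR i := by
        have : x ∈ {x : ↥(gcSᶜ) | gcG x.val = i} := hc
        rwa [hfiber i] at this
      have hy : y ∈ Subtype.val ⁻¹' gcR i := by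
        have : y ∈ {x : ↥(gcSᶜ) | gcG x.val = i} := rfl
        rwa [hfiber i] at this
      have hpre : IsPreconnected (Subtype.val ⁻¹' gcR i : Set ↥(gcSᶜ)) := by
        rw [← Topology.IsInducing.subtypeVal.isPreconnected_image]
        rw [Subtype.image_preimage_coe]
        rw [Set.inter_eq_self_of_subset_right (gcR_subset i)]
        exact gcR_preconn i
      exact ConnectedComponents.coe_eq_coe'.2 (hpre.subset_connectedComponent hy hx)
    · intro i
      obtain ⟨p, hp⟩ := gcR_nonempty i
      exact ⟨((⟨p, gcR_subset i hp⟩ : ↥(gcSᶜ)) : ConnectedComponents ↥(gcSᶜ)),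
        gcG_of_mem hp⟩
  rw [Nat.card_eq_of_bijective _ hbij, Nat.card_eq_fintype_card, Fintype.card_fin]

/-- The Goryachev–Chaplygin bifurcation set `S0` divides the `(h,k)`-plane
into exactly 5 open connected components. -/
theorem goryachev_chaplygin_bifurcation_components
    (S0 : Set (ℝ × ℝ))
    (hS : S0 = {p | p.2 = 0 ∧ -1 ≤ p.1}
      ∪ {p | p.1 = (3/2) * (2 * |p.2|) ^ ((2:ℝ)/3) + 1}
      ∪ {p | p.1 = (3/2) * (2 * |p.2|) ^ ((2:ℝ)/3) - 1}) :
    Nat.card (ConnectedComponents ↥(S0ᶜ)) = 5 := by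
  have h : S0 = gcS := by rw [hS]; rfl
  rw [h]
  exact gc_main
end
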